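/- Let q ≠ 0 and let γ : ℝ → E be a smooth curve satisfying γ''(t) = -q·φ(γ'(t)) for all t ∈ ℝ. Then there exist real constants c_i ≥ 0, d_i, b_i, b_{n+i} (for i = 1,…,n) and a_α, h_α (for α = 1,…,s) such that for all t ∈ ℝ: γ_i(t) = (c_i/q)·sin(qt + d_i) + b_i, γ_{n+i}(t) = -(c_i/q)·cos(qt + d_i) + b_{n+i}, and γ_{2n+α}(t) = a_α·t + h_α. -/

import Mathlib

open scoped RealInnerProductSpace

/-- The structure tensor `φ` of the standard `C`-manifold structure on `ℝ^{2n+s}`: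
`(φv)_i = v_{n+i}`, `(φv)_{n+i} = -v_i` for `0 ≤ i < n`, and `(φv)_{2n+α} = 0`. -/
noncomputable def phi (n s : ℕ) (v : EuclideanSpace ℝ (Fin (2*n+s))) :
    EuclideanSpace ℝ (Fin (2*n+s)) := WithLp.toLp 2 (fun k : Fin (2*n+s) =>
  if _h1 : (k : ℕ) < n then v ⟨n + (k : ℕ), by omega⟩
  else if _h2 : (k : ℕ) < 2*n then -v ⟨(k : ℕ) - n, by omega⟩
  else 0)

/-- The index `2n+α` of the characteristic direction `ξ_α = e_{2n+α}`. -/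
def idxA (n s : ℕ) (α : Fin s) : Fin (2*n+s) := ⟨2*n + (α : ℕ), by omega⟩

/-- The index `i` for `1 ≤ i ≤ n` (0-based). -/
def idxI (n s : ℕ) (i : Fin n) : Fin (2*n+s) := ⟨(i : ℕ), by omega⟩

/-- The index `n+i` for `1 ≤ i ≤ n` (0-based). -/
def idxNI (n s : ℕ) (i : Fin n) : Fin (2*n+s) := ⟨n + (i : ℕ), by omega⟩

/- auxiliary lemmas -/

lemma aux_eq_add_const (f F f' : ℝ → ℝ) (hf : ∀ t, HasDerivAt f (f' t) t)
    (hF : ∀ t, HasDerivAt F (f' t) t) : ∀ t, f t = F t + (f 0 - F 0) := by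
  have hD : ∀ t, HasDerivAt (fun u => f u - F u) 0 t := fun t => by
    exact ((hf t).sub (hF t)).congr_deriv (sub_self _)
  have hc : ∀ t : ℝ, f t - F t = f 0 - F 0 := fun t =>
    is_const_of_deriv_eq_zero (fun u => (hD u).differentiableAt)
      (fun u => (hD u).deriv) t 0
  intro t; have := hc t; linarith

lemma aux_rotation (q : ℝ) (x y : ℝ → ℝ)
    (hx : ∀ t, HasDerivAt x (-q * y t) t) (hy : ∀ t, HasDerivAt y (q * x t) t) :
    ∃ c d : ℝ, 0 ≤ c ∧ ∀ t, x t = c * Real.cos (q * t + d) ∧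
      y t = c * Real.sin (q * t + d) := by
  have hqt : ∀ t : ℝ, HasDerivAt (fun u => q * u) q t := fun t => by
    simpa using (hasDerivAt_id t).const_mul q
  have hcos : ∀ t : ℝ, HasDerivAt (fun u => Real.cos (q * u)) (-Real.sin (q * t) * q) t :=
    fun t => (Real.hasDerivAt_cos (q * t)).comp t (hqt t)
  have hsin : ∀ t : ℝ, HasDerivAt (fun u => Real.sin (q * u)) (Real.cos (q * t) * q) t :=
    fun t => (Real.hasDerivAt_sin (q * t)).comp t (hqt t)
  -- u and v are constant
  have hu : ∀ t, HasDerivAt (fun u => x u * Real.cos (q * u) + y u * Real.sin (q * u)) 0 t := by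
    intro t
    have h := ((hx t).mul (hcos t)).add ((hy t).mul (hsin t))
    exact h.congr_deriv (by ring)
  have hv : ∀ t, HasDerivAt (fun u => -(x u) * Real.sin (q * u) + y u * Real.cos (q * u)) 0 t := by
    intro t
    have h := (((hx t).neg).mul (hsin t)).add ((hy t).mul (hcos t))
    exact h.congr_deriv (by simp only [Pi.neg_apply]; ring)
  have hcu : ∀ t : ℝ, x t * Real.cos (q * t) + y t * Real.sin (q * t) = x 0 := by
    intro t
    have := is_const_of_deriv_eq_zero (fun u => (hu u).differentiableAt)
      (fun u => (hu u).deriv) t 0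
    simpa using this
  have hcv : ∀ t : ℝ, -(x t) * Real.sin (q * t) + y t * Real.cos (q * t) = y 0 := by
    intro t
    have := is_const_of_deriv_eq_zero (fun u => (hv u).differentiableAt)
      (fun u => (hv u).deriv) t 0
    simpa using this
  have hxt : ∀ t, x t = x 0 * Real.cos (q * t) - y 0 * Real.sin (q * t) := by
    intro t
    have h1 := hcu t; have h2 := hcv t
    have hpy := Real.sin_sq_add_cos_sq (q * t)
    rw [← h1, ← h2]
    linear_combination (-(x t)) * hpy
  have hyt : ∀ t, y t = x 0 * Real.sin (q * t) + y 0 * Real.cos (q * t) := by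
    intro t
    have h1 := hcu t; have h2 := hcv t
    have hpy := Real.sin_sq_add_cos_sq (q * t)
    rw [← h1, ← h2]
    linear_combination (-(y t)) * hpy
  set z : ℂ := ⟨x 0, y 0⟩ with hz
  refine ⟨‖z‖, z.arg, norm_nonneg z, fun t => ?_⟩
  have hre : ‖z‖ * Real.cos z.arg = x 0 := Complex.norm_mul_cos_arg z
  have him : ‖z‖ * Real.sin z.arg = y 0 := Complex.norm_mul_sin_arg z
  constructor
  · rw [hxt t, Real.cos_add, ← hre, ← him]; ring
  · rw [hyt t, Real.sin_add, ← hre, ← him]; ring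

lemma aux_comp_deriv {m : ℕ} (f : ℝ → EuclideanSpace ℝ (Fin m)) (hf : Differentiable ℝ f)
    (k : Fin m) (t : ℝ) : HasDerivAt (fun u => f u k) (deriv f t k) t := by
  have h1 := (hf t).hasDerivAt
  have := (EuclideanSpace.proj k).hasFDerivAt.comp_hasDerivAt t h1
  exact this

lemma phi_idxI (n s : ℕ) (v : EuclideanSpace ℝ (Fin (2*n+s))) (i : Fin n) :
    phi n s v (idxI n s i) = v (idxNI n s i) := by
  simp only [phi, idxI, idxNI, PiLp.toLp_apply]
  rw [dif_pos i.isLt]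

lemma phi_idxNI (n s : ℕ) (hn : 0 < n) (v : EuclideanSpace ℝ (Fin (2*n+s))) (i : Fin n) :
    phi n s v (idxNI n s i) = -v (idxI n s i) := by
  have hi := i.isLt
  simp only [phi, idxI, idxNI, PiLp.toLp_apply]
  rw [dif_neg (by omega), dif_pos (by omega)]
  exact congrArg (fun j => -v j) (Fin.ext (by simp only [Fin.val_mk]; omega))

lemma phi_idxA (n s : ℕ) (v : EuclideanSpace ℝ (Fin (2*n+s))) (α : Fin s) :
    phi n s v (idxA n s α) = 0 := by
  simp only [phi, idxA, PiLp.toLp_apply]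
  rw [dif_neg (by omega), dif_neg (by omega)]

/-- Parametrization of magnetic curves in the standard `C`-manifold `ℝ^{2n+s}`:
a smooth curve satisfying the Lorentz equation `γ'' = -q·φ(γ')` with `q ≠ 0` has components
`γ_i = (c_i/q)sin(qt+d_i) + b_i`, `γ_{n+i} = -(c_i/q)cos(qt+d_i) + b_{n+i}`,
`γ_{2n+α} = a_α t + h_α`. -/
theorem magnetic_curve_parametrization
    (n s : ℕ) (hn : 0 < n) (hs : 0 < s) (q : ℝ) (hq : q ≠ 0)
    (γ : ℝ → EuclideanSpace ℝ (Fin (2*n+s))) (hγ : ContDiff ℝ (⊤ : ℕ∞) γ)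
    (hmag : ∀ t : ℝ, deriv (deriv γ) t = (-q) • phi n s (deriv γ t)) :
    ∃ c d b bb : Fin n → ℝ, ∃ a h : Fin s → ℝ,
      (∀ i : Fin n, 0 ≤ c i) ∧
      ∀ t : ℝ,
        (∀ i : Fin n,
          γ t (idxI n s i) = c i / q * Real.sin (q * t + d i) + b i ∧
          γ t (idxNI n s i) = -(c i / q) * Real.cos (q * t + d i) + bb i) ∧
        (∀ α : Fin s, γ t (idxA n s α) = a α * t + h α) := by
  have hγd : Differentiable ℝ γ := hγ.differentiable (by simp)
  have hγ'd : Differentiable ℝ (deriv γ) :=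
    ((contDiff_infty_iff_deriv.mp (hγ.of_le (by simp))).2).differentiable (by simp)
  have hsmul : ∀ (w : EuclideanSpace ℝ (Fin (2*n+s))) (k : Fin (2*n+s)),
      ((-q) • w) k = -q * w k := fun w k => rfl
  have hqt' : ∀ (d : ℝ) (t : ℝ), HasDerivAt (fun u : ℝ => q * u + d) q t := fun d t => by
    simpa using ((hasDerivAt_id t).const_mul q).add_const d
  -- sinusoidal components
  have H : ∀ i : Fin n, ∃ ci di bi bbi : ℝ, 0 ≤ ci ∧ ∀ t : ℝ,
      γ t (idxI n s i) = ci / q * Real.sin (q * t + di) + bi ∧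
      γ t (idxNI n s i) = -(ci / q) * Real.cos (q * t + di) + bbi := by
    intro i
    set x : ℝ → ℝ := fun t => deriv γ t (idxI n s i) with hxdef
    set y : ℝ → ℝ := fun t => deriv γ t (idxNI n s i) with hydef
    have hx : ∀ t, HasDerivAt x (-q * y t) t := by
      intro t
      have h := aux_comp_deriv (deriv γ) hγ'd (idxI n s i) t
      rwa [hmag t, hsmul, phi_idxI] at h
    have hy : ∀ t, HasDerivAt y (q * x t) t := by
      intro t
      have h := aux_comp_deriv (deriv γ) hγ'd (idxNI n s i) t
      rw [hmag t, hsmul, phi_idxNI n s hn] at h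
      convert h using 1; ring
    obtain ⟨c, d, hc, hcd⟩ := aux_rotation q x y hx hy
    -- antiderivatives
    have hF1 : ∀ t : ℝ, HasDerivAt (fun u => c / q * Real.sin (q * u + d))
        (c * Real.cos (q * t + d)) t := by
      intro t
      have h := ((Real.hasDerivAt_sin (q * t + d)).comp t (hqt' d t)).const_mul (c / q)
      exact h.congr_deriv (by field_simp)
    have hF2 : ∀ t : ℝ, HasDerivAt (fun u => -(c / q) * Real.cos (q * u + d))
        (c * Real.sin (q * t + d)) t := by
      intro t
      have h := ((Real.hasDerivAt_cos (q * t + d)).comp t (hqt' d t)).const_mul (-(c / q))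
      exact h.congr_deriv (by field_simp)
    have hg1 : ∀ t, HasDerivAt (fun u => γ u (idxI n s i)) (c * Real.cos (q * t + d)) t := by
      intro t
      have h := aux_comp_deriv γ hγd (idxI n s i) t
      rwa [show deriv γ t (idxI n s i) = c * Real.cos (q * t + d) from (hcd t).1] at h
    have hg2 : ∀ t, HasDerivAt (fun u => γ u (idxNI n s i)) (c * Real.sin (q * t + d)) t := by
      intro t
      have h := aux_comp_deriv γ hγd (idxNI n s i) t
      rwa [show deriv γ t (idxNI n s i) = c * Real.sin (q * t + d) from (hcd t).2] at h
    have he1 := aux_eq_add_const (fun u => γ u (idxI n s i))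
      (fun u => c / q * Real.sin (q * u + d)) _ hg1 hF1
    have he2 := aux_eq_add_const (fun u => γ u (idxNI n s i))
      (fun u => -(c / q) * Real.cos (q * u + d)) _ hg2 hF2
    exact ⟨c, d, _, _, hc, fun t => ⟨he1 t, he2 t⟩⟩
  -- linear components
  have HA : ∀ α : Fin s, ∃ aα hα : ℝ, ∀ t : ℝ, γ t (idxA n s α) = aα * t + hα := by
    intro α
    have hz : ∀ t, HasDerivAt (fun u => deriv γ u (idxA n s α)) 0 t := by
      intro t
      have h := aux_comp_deriv (deriv γ) hγ'd (idxA n s α) t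
      rwa [hmag t, hsmul, phi_idxA, mul_zero] at h
    have hconst : ∀ t : ℝ, deriv γ t (idxA n s α) = deriv γ 0 (idxA n s α) := fun t =>
      is_const_of_deriv_eq_zero (fun u => (hz u).differentiableAt) (fun u => (hz u).deriv) t 0
    set a := deriv γ 0 (idxA n s α) with ha
    have hg : ∀ t, HasDerivAt (fun u => γ u (idxA n s α)) a t := by
      intro t
      have h := aux_comp_deriv γ hγd (idxA n s α) t
      rwa [hconst t] at h
    have hF : ∀ t : ℝ, HasDerivAt (fun u : ℝ => a * u) a t := fun t => by
      simpa using (hasDerivAt_id t).const_mul a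
    have he := aux_eq_add_const (fun u => γ u (idxA n s α)) (fun u => a * u) (fun _ => a) hg hF
    exact ⟨a, _, fun t => by simpa using he t⟩
  choose c d b bb hc hcomp using H
  choose a h hA using HA
  exact ⟨c, d, b, bb, a, h, hc, fun t => ⟨fun i => hcomp i t, fun α => hA α t⟩⟩
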